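/- arXiv:1811.11734 — 6 statements merged into one kernel-verified Lean document; each statement's English description precedes it below -/
import Mathlib

section
/- Let (T,c) be an algebraic tree (c : T³ → T satisfying symmetry, the 2-point condition c(x,y,y)=y, the 3-point condition c(x,y,c(x,y,z))=c(x,y,z), and the 4-point condition c(x₁,x₂,x₃) ∈ {c(x₁,x₂,x₄), c(x₁,x₃,x₄), c(x₂,x₃,x₄)}). If c(x₁,x₂,x₃)=c(x₁,x₂,x₄), then c(x₁,x₃,x₄)=c(x₂,x₃,x₄). -/
/-!
Write `a = c(x₁,x₃,x₄)`, `b = c(x₂,x₃,x₄)` and `m = c(x₁,x₂,x₃) = c(x₁,x₂,x₄)`. The 4-point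
condition for `(x₁,x₃,x₄)` against `x₂` gives `a = m` or `a = b`, and for `(x₂,x₃,x₄)` against
`x₁` it gives `b = m` or `b = a`; in every case `a = b`.
-/

variable {T : Type*}

/-- An algebraic tree: a symmetric branch point map satisfying the
2-point, 3-point and 4-point conditions (BPM1)–(BPM4). -/
def IsAlgTree (c : T → T → T → T) : Prop :=
  (∀ x y z, c x y z = c y x z) ∧
  (∀ x y z, c x y z = c x z y) ∧
  (∀ x y, c x y y = y) ∧
  (∀ x y z, c x y (c x y z) = c x y z) ∧
  (∀ x₁ x₂ x₃ x₄, c x₁ x₂ x₃ = c x₁ x₂ x₄ ∨ c x₁ x₂ x₃ = c x₁ x₃ x₄ ∨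
    c x₁ x₂ x₃ = c x₂ x₃ x₄)

/-- The interval `[x,y] = {w : c(x,y,w) = w}`. -/
def interval (c : T → T → T → T) (x y : T) : Set T := {w | c x y w = w}

namespace IsAlgTree

variable {c : T → T → T → T} (hc : IsAlgTree c)
include hc

theorem swap_left (x y z : T) : c x y z = c y x z := hc.1 x y z

theorem swap_right (x y z : T) : c x y z = c x z y := hc.2.1 x y z

theorem rotate (x y z : T) : c x y z = c y z x := by
  rw [hc.swap_left, hc.swap_right]

theorem four_point (x₁ x₂ x₃ x₄ : T) :
    c x₁ x₂ x₃ = c x₁ x₂ x₄ ∨ c x₁ x₂ x₃ = c x₁ x₃ x₄ ∨ c x₁ x₂ x₃ = c x₂ x₃ x₄ :=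
  hc.2.2.2.2 x₁ x₂ x₃ x₄

theorem eq_or_eq_of_median_eq {x₁ x₂ x₃ x₄ : T} (h : c x₁ x₂ x₃ = c x₁ x₂ x₄) :
    c x₁ x₃ x₄ = c x₁ x₂ x₃ ∨ c x₁ x₃ x₄ = c x₂ x₃ x₄ := by
  rcases hc.four_point x₁ x₃ x₄ x₂ with h' | h' | h'
  · exact .inl (h'.trans (hc.swap_right x₁ x₃ x₂))
  · exact .inl (h'.trans ((hc.swap_right x₁ x₄ x₂).trans h.symm))
  · exact .inr (h'.trans (hc.rotate x₂ x₃ x₄).symm)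

end IsAlgTree

theorem stmt_0_general (c : T → T → T → T) (hc : IsAlgTree c)
    (x₁ x₂ x₃ x₄ : T) (h : c x₁ x₂ x₃ = c x₁ x₂ x₄) :
    c x₁ x₃ x₄ = c x₂ x₃ x₄ := by
  have h' : c x₂ x₁ x₃ = c x₂ x₁ x₄ := by rw [hc.swap_left x₂, hc.swap_left x₂, h]
  rcases hc.eq_or_eq_of_median_eq h with ha | ha
  · rcases hc.eq_or_eq_of_median_eq h' with hb | hb
    · rw [ha, hb, hc.swap_left]
    · exact hb.symm
  · exact ha

theorem stmt_0 [Nonempty T] (c : T → T → T → T) (hc : IsAlgTree c)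
    (x₁ x₂ x₃ x₄ : T) (h : c x₁ x₂ x₃ = c x₁ x₂ x₄) :
    c x₁ x₃ x₄ = c x₂ x₃ x₄ :=
  stmt_0_general c hc x₁ x₂ x₃ x₄ h
end

section
/- Let (T,c) be an algebraic tree. Then for all x,y,z ∈ T, [x,y] ∩ [y,z] ∩ [z,x] = {c(x,y,z)}. -/
variable {T : Type*}

namespace IsAlgTree

variable {c : T → T → T → T} (hc : IsAlgTree c)
include hc

theorem mem_interval (x y z : T) : c x y z ∈ interval c x y := hc.2.2.2.1 x y z

/-- Taking `x₄ = w` in the 4-point condition, each alternative evaluates to `w`. -/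
theorem eq_of_mem_intervals {x y z w : T}
    (hxy : w ∈ interval c x y) (hyz : w ∈ interval c y z) (hzx : w ∈ interval c z x) :
    w = c x y z := by
  rcases hc.2.2.2.2 x y z w with h | h | h
  · exact hxy.symm.trans h.symm
  · rw [h, hc.swap_left]; exact hzx.symm
  · rw [h]; exact hyz.symm

end IsAlgTree

theorem stmt_7_general (c : T → T → T → T) (hc : IsAlgTree c)
    (x y z : T) :
    interval c x y ∩ interval c y z ∩ interval c z x = {c x y z} := by
  ext w
  constructor
  · rintro ⟨⟨hxy, hyz⟩, hzx⟩
    exact hc.eq_of_mem_intervals hxy hyz hzx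
  · rintro rfl
    refine ⟨⟨hc.mem_interval x y z, ?_⟩, ?_⟩
    · rw [hc.rotate]; exact hc.mem_interval y z x
    · rw [hc.rotate, hc.rotate]; exact hc.mem_interval z x y

theorem stmt_7 [Nonempty T] (c : T → T → T → T) (hc : IsAlgTree c)
    (x y z : T) :
    interval c x y ∩ interval c y z ∩ interval c z x = {c x y z} :=
  stmt_7_general c hc x y z
end

section
/- Let (T,≤) be a partially ordered set with meets (a meet semilattice) such that every initial segment {y : y ≤ x} is totally ordered. Define c(x,y,z) := max{x∧y, y∧z, z∧x}. Then this maximum exists, and (T,c) is an algebraic tree, i.e., c is symmetric and satisfies c(x,y,y)=y, c(x,y,c(x,y,z))=c(x,y,z), and the 4-point condition. -/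
variable {T : Type*}

/-!
In a meet semilattice whose initial segments are chains, two meets `x ⊓ w` and `x ⊓ y` lying
below the same point are comparable, and if `x ⊓ w` is not below `x ⊓ y` then `y ⊓ w ≤ x ⊓ y`:
comparing `x ⊓ w` with `y ⊓ w` below `w`, the alternative `x ⊓ w ≤ y ⊓ w` would put `x ⊓ w`
below `x ⊓ y`. These two facts give the existence of the largest pairwise meet, and then the
4-point condition: if `c(x₁,x₂,x₃) = x₁ ⊓ x₂` and `x₁ ⊓ x₄` is not below it, then `x₄` meets
both `x₂` and `x₃` below `x₁ ⊓ x₂`, which forces `c(x₂,x₃,x₄) = x₂ ⊓ x₄ = x₁ ⊓ x₂`.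
-/

section Preorder

variable {α : Type*} [Preorder α]

theorem le_of_not_le_of_le_of_le (htot : ∀ x : α, IsChain (· ≤ ·) {y : α | y ≤ x})
    {a b x : α} (ha : a ≤ x) (hb : b ≤ x) (h : ¬a ≤ b) : b ≤ a :=
  ((htot x).total ha hb).resolve_left h

end Preorder

section SemilatticeInf

variable {α : Type*} [SemilatticeInf α]

def infTriple (x y z : α) : Set α := {x ⊓ y, y ⊓ z, z ⊓ x}

theorem infTriple_swap_left (x y z : α) : infTriple y x z = infTriple x y z := by
  ext w
  simp only [infTriple, Set.mem_insert_iff, Set.mem_singleton_iff, inf_comm]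
  tauto

theorem infTriple_swap_right (x y z : α) : infTriple x z y = infTriple x y z := by
  ext w
  simp only [infTriple, Set.mem_insert_iff, Set.mem_singleton_iff, inf_comm]
  tauto

theorem isGreatest_infTriple {x y z m : α} (hm : m ∈ infTriple x y z) (hxy : x ⊓ y ≤ m)
    (hyz : y ⊓ z ≤ m) (hzx : z ⊓ x ≤ m) : IsGreatest (infTriple x y z) m := by
  refine ⟨hm, ?_⟩
  rintro w (rfl | rfl | rfl) <;> assumption

theorem inf_le_inf_of_not_inf_le (htot : ∀ x : α, IsChain (· ≤ ·) {y : α | y ≤ x})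
    {x y w : α} (h : ¬x ⊓ w ≤ x ⊓ y) : y ⊓ w ≤ x ⊓ y := by
  rcases (htot w).total (inf_le_right : x ⊓ w ≤ w) (inf_le_right : y ⊓ w ≤ w) with hle | hle
  · exact absurd (le_inf inf_le_left (hle.trans inf_le_left)) h
  · exact le_inf (hle.trans inf_le_left) inf_le_left

def IsMaxOfInfs (c : α → α → α → α) : Prop :=
  ∀ x y z, IsGreatest (infTriple x y z) (c x y z)

theorem exists_isMaxOfInfs (htot : ∀ x : α, IsChain (· ≤ ·) {y : α | y ≤ x}) :
    ∃ c : α → α → α → α, IsMaxOfInfs c := by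
  suffices h : ∀ x y z : α, ∃ m, IsGreatest (infTriple x y z) m by
    choose c hc using h
    exact ⟨c, hc⟩
  intro x y z
  by_cases hyz : y ⊓ z ≤ x ⊓ y
  · by_cases hzx : z ⊓ x ≤ x ⊓ y
    · exact ⟨x ⊓ y, isGreatest_infTriple (by simp [infTriple]) le_rfl hyz hzx⟩
    · have hxy : x ⊓ y ≤ z ⊓ x :=
        le_of_not_le_of_le_of_le htot inf_le_right inf_le_left hzx
      exact ⟨z ⊓ x, isGreatest_infTriple (by simp [infTriple]) hxy (hyz.trans hxy) le_rfl⟩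
  · have hxy : x ⊓ y ≤ y ⊓ z := le_of_not_le_of_le_of_le htot inf_le_left inf_le_right hyz
    have hzx : z ⊓ x ≤ x ⊓ y := by
      simpa only [inf_comm] using inf_le_inf_of_not_inf_le htot (x := y) (y := x) (w := z)
        (by rwa [inf_comm y x])
    exact ⟨y ⊓ z, isGreatest_infTriple (by simp [infTriple]) hxy le_rfl (hzx.trans hxy)⟩

namespace IsMaxOfInfs

variable {c : α → α → α → α}

theorem eq_of_isGreatest (hc : IsMaxOfInfs c) {x y z m : α}
    (h : IsGreatest (infTriple x y z) m) : c x y z = m :=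
  (hc x y z).unique h

theorem swap_left (hc : IsMaxOfInfs c) (x y z : α) : c x y z = c y x z :=
  hc.eq_of_isGreatest (infTriple_swap_left x y z ▸ hc y x z)

theorem swap_right (hc : IsMaxOfInfs c) (x y z : α) : c x y z = c x z y :=
  hc.eq_of_isGreatest (infTriple_swap_right x y z ▸ hc x z y)

theorem self_right (hc : IsMaxOfInfs c) (x y : α) : c x y y = y := by
  refine hc.eq_of_isGreatest (isGreatest_infTriple ?_ inf_le_right (inf_idem y).le inf_le_left)
  simp [infTriple]

theorem idem (hc : IsMaxOfInfs c) (x y z : α) : c x y (c x y z) = c x y z := by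
  obtain ⟨hmem, hub⟩ := hc x y z
  refine hc.eq_of_isGreatest (isGreatest_infTriple ?_ (hub (by simp [infTriple]))
    inf_le_right inf_le_left)
  rcases hmem with h | h | h
  · exact Or.inl h
  · exact Or.inr (Or.inl (inf_eq_right.mpr (h ▸ inf_le_left)).symm)
  · exact Or.inr (Or.inr (inf_eq_left.mpr (h ▸ inf_le_right)).symm)

theorem eq_inf_of_not_inf_le (hc : IsMaxOfInfs c)
    (htot : ∀ x : α, IsChain (· ≤ ·) {y : α | y ≤ x}) {x₁ x₂ x₃ x₄ : α}
    (h₂₃ : x₂ ⊓ x₃ ≤ x₁ ⊓ x₂) (h₁₃ : x₁ ⊓ x₃ ≤ x₁ ⊓ x₂) (h₁₄ : ¬x₁ ⊓ x₄ ≤ x₁ ⊓ x₂) :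
    c x₂ x₃ x₄ = x₁ ⊓ x₂ := by
  have hle : x₁ ⊓ x₂ ≤ x₁ ⊓ x₄ := le_of_not_le_of_le_of_le htot inf_le_left inf_le_left h₁₄
  have h₂₄ : x₂ ⊓ x₄ = x₁ ⊓ x₂ :=
    le_antisymm (inf_le_inf_of_not_inf_le htot h₁₄) (le_inf inf_le_right (hle.trans inf_le_right))
  have h₃₄ : x₃ ⊓ x₄ ≤ x₁ ⊓ x₂ :=
    (inf_le_inf_of_not_inf_le htot fun h ↦ h₁₄ (h.trans h₁₃)).trans h₁₃
  rw [inf_comm x₂ x₄] at h₂₄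
  exact hc.eq_of_isGreatest (isGreatest_infTriple (by simp [infTriple, h₂₄]) h₂₃ h₃₄ h₂₄.le)

theorem four_point_of_eq_inf (hc : IsMaxOfInfs c)
    (htot : ∀ x : α, IsChain (· ≤ ·) {y : α | y ≤ x}) {x₁ x₂ x₃ : α} (x₄ : α)
    (h : c x₁ x₂ x₃ = x₁ ⊓ x₂) :
    c x₁ x₂ x₃ = c x₁ x₂ x₄ ∨ c x₁ x₂ x₃ = c x₁ x₃ x₄ ∨ c x₁ x₂ x₃ = c x₂ x₃ x₄ := by
  have h₂₃ : x₂ ⊓ x₃ ≤ x₁ ⊓ x₂ := h ▸ (hc x₁ x₂ x₃).2 (by simp [infTriple])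
  have h₁₃ : x₁ ⊓ x₃ ≤ x₁ ⊓ x₂ := h ▸ inf_comm x₃ x₁ ▸ (hc x₁ x₂ x₃).2 (by simp [infTriple])
  rw [h]
  by_cases h₁₄ : x₁ ⊓ x₄ ≤ x₁ ⊓ x₂
  · by_cases h₂₄ : x₂ ⊓ x₄ ≤ x₁ ⊓ x₂
    · left
      exact (hc.eq_of_isGreatest (isGreatest_infTriple (by simp [infTriple]) le_rfl h₂₄
        (inf_comm x₄ x₁ ▸ h₁₄))).symm
    · right; left
      rw [inf_comm x₁ x₂] at h₁₃ h₂₃ h₂₄ ⊢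
      exact (hc.eq_inf_of_not_inf_le htot h₁₃ h₂₃ h₂₄).symm
  · right; right
    exact (hc.eq_inf_of_not_inf_le htot h₂₃ h₁₃ h₁₄).symm

theorem four_point (hc : IsMaxOfInfs c) (htot : ∀ x : α, IsChain (· ≤ ·) {y : α | y ≤ x})
    (x₁ x₂ x₃ x₄ : α) :
    c x₁ x₂ x₃ = c x₁ x₂ x₄ ∨ c x₁ x₂ x₃ = c x₁ x₃ x₄ ∨ c x₁ x₂ x₃ = c x₂ x₃ x₄ := by
  have h₂₃₁ : c x₂ x₃ x₁ = c x₁ x₂ x₃ := by rw [hc.swap_right, hc.swap_left]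
  have h₃₁₂ : c x₃ x₁ x₂ = c x₁ x₂ x₃ := by rw [hc.swap_left, hc.swap_right]
  rcases (hc x₁ x₂ x₃).1 with h | h | h
  · exact hc.four_point_of_eq_inf htot x₄ h
  · rcases hc.four_point_of_eq_inf htot x₄ (h₂₃₁.trans h) with h' | h' | h' <;>
      simp only [h₂₃₁, hc.swap_left x₂ x₁, hc.swap_left x₃ x₁] at h' <;> tauto
  · rcases hc.four_point_of_eq_inf htot x₄ (h₃₁₂.trans h) with h' | h' | h' <;>
      simp only [h₃₁₂, hc.swap_left x₃ x₁, hc.swap_left x₃ x₂] at h' <;> tauto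

end IsMaxOfInfs

end SemilatticeInf

theorem stmt_10_general (T : Type*) [SemilatticeInf T]
    (htot : ∀ x : T, IsChain (· ≤ ·) {y : T | y ≤ x}) :
    ∃ c : T → T → T → T,
      (∀ x y z : T, IsGreatest {x ⊓ y, y ⊓ z, z ⊓ x} (c x y z)) ∧
      IsAlgTree c := by
  obtain ⟨c, hc⟩ := exists_isMaxOfInfs htot
  exact ⟨c, hc, hc.swap_left, hc.swap_right, hc.self_right, hc.idem, hc.four_point htot⟩

theorem stmt_10 (T : Type*) [Nonempty T] [SemilatticeInf T]
    (htot : ∀ x : T, IsChain (· ≤ ·) {y : T | y ≤ x}) :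
    ∃ c : T → T → T → T,
      (∀ x y z : T, IsGreatest {x ⊓ y, y ⊓ z, z ⊓ x} (c x y z)) ∧
      IsAlgTree c :=
  stmt_10_general T htot
end

section
/- Let (T,c) and (T',c') be algebraic trees and f : T → T'. Then the following are equivalent: (1) f is a tree homomorphism, i.e., f(c(x,y,z)) = c'(f(x),f(y),f(z)) for all x,y,z; (2) for every ρ ∈ T, f is order preserving from (T, ≤_ρ) to (T', ≤_{f(ρ)}); (3) f([x,y]) ⊆ [f(x),f(y)] for all x,y ∈ T. -/
/-!
A homomorphism maps `[x,y]` into `[f x, f y]` because `w ∈ [x,y]` just says `c(x,y,w) = w`.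
Conversely, by the 4-point condition `c(x,y,z)` is the only point lying on all three of
`[x,y]`, `[y,z]` and `[x,z]`; a map preserving intervals sends it to a point on all three
intervals between `f x`, `f y`, `f z`, which must therefore be `c'(f x, f y, f z)`.
-/

variable {T : Type*}

namespace IsAlgTree

variable {c : T → T → T → T}

lemma branch_mem_interval_left (h : IsAlgTree c) (x y z : T) : c x y z ∈ interval c x y :=
  h.2.2.2.1 x y z

lemma branch_mem_interval_right (h : IsAlgTree c) (x y z : T) : c x y z ∈ interval c y z := by
  have hrot : c x y z = c y z x := by rw [h.1 x y z, h.2.1 y x z]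
  show c y z (c x y z) = c x y z
  rw [hrot]
  exact h.2.2.2.1 y z x

lemma branch_mem_interval_outer (h : IsAlgTree c) (x y z : T) : c x y z ∈ interval c x z := by
  show c x z (c x y z) = c x y z
  rw [h.2.1 x y z]
  exact h.2.2.2.1 x z y

lemma branch_eq_of_mem_intervals (h : IsAlgTree c) {x y z w : T} (hxy : w ∈ interval c x y)
    (hyz : w ∈ interval c y z) (hxz : w ∈ interval c x z) : c x y z = w := by
  rcases h.2.2.2.2 x y z w with hw | hw | hw
  · exact hw.trans hxy
  · exact hw.trans hxz
  · exact hw.trans hyz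

end IsAlgTree

def IsTreeHom {T' : Type*} (c : T → T → T → T) (c' : T' → T' → T' → T') (f : T → T') : Prop :=
  ∀ x y z, f (c x y z) = c' (f x) (f y) (f z)

theorem IsTreeHom.mapsTo_interval {T' : Type*} {c : T → T → T → T} {c' : T' → T' → T' → T'}
    {f : T → T'} (hf : IsTreeHom c c' f) (x y : T) :
    Set.MapsTo f (interval c x y) (interval c' (f x) (f y)) := fun w hw => by
  show c' (f x) (f y) (f w) = f w
  rw [← hf, hw]

theorem isTreeHom_of_mapsTo_interval {T' : Type*} {c : T → T → T → T}
    {c' : T' → T' → T' → T'} (hc : IsAlgTree c) (hc' : IsAlgTree c') {f : T → T'}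
    (hf : ∀ x y, Set.MapsTo f (interval c x y) (interval c' (f x) (f y))) :
    IsTreeHom c c' f := fun x y z =>
  (hc'.branch_eq_of_mem_intervals (hf x y (hc.branch_mem_interval_left x y z))
    (hf y z (hc.branch_mem_interval_right x y z))
    (hf x z (hc.branch_mem_interval_outer x y z))).symm

theorem isTreeHom_iff_mapsTo_interval {T' : Type*} {c : T → T → T → T}
    {c' : T' → T' → T' → T'} (hc : IsAlgTree c) (hc' : IsAlgTree c') (f : T → T') :
    IsTreeHom c c' f ↔ ∀ x y, Set.MapsTo f (interval c x y) (interval c' (f x) (f y)) :=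
  ⟨IsTreeHom.mapsTo_interval, isTreeHom_of_mapsTo_interval hc hc'⟩

theorem stmt_13_general {T' : Type*}
    (c : T → T → T → T) (c' : T' → T' → T' → T')
    (hc : IsAlgTree c) (hc' : IsAlgTree c') (f : T → T') :
    ((∀ x y z, f (c x y z) = c' (f x) (f y) (f z)) ↔
      (∀ ρ x y : T, x ∈ interval c ρ y → f x ∈ interval c' (f ρ) (f y))) ∧
    ((∀ x y z, f (c x y z) = c' (f x) (f y) (f z)) ↔
      (∀ x y : T, f '' interval c x y ⊆ interval c' (f x) (f y))) := by
  have hom_iff := isTreeHom_iff_mapsTo_interval hc hc' f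
  constructor
  · exact hom_iff.trans ⟨fun h ρ x y hx => h ρ y hx, fun h ρ y x hx => h ρ x y hx⟩
  · exact hom_iff.trans (forall₂_congr fun x y => Set.mapsTo_iff_image_subset)

theorem stmt_13 {T' : Type*} [Nonempty T] [Nonempty T']
    (c : T → T → T → T) (c' : T' → T' → T' → T')
    (hc : IsAlgTree c) (hc' : IsAlgTree c') (f : T → T') :
    ((∀ x y z, f (c x y z) = c' (f x) (f y) (f z)) ↔
      (∀ ρ x y : T, x ∈ interval c ρ y → f x ∈ interval c' (f ρ) (f y))) ∧
    ((∀ x y z, f (c x y z) = c' (f x) (f y) (f z)) ↔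
      (∀ x y : T, f '' interval c x y ⊆ interval c' (f x) (f y))) :=
  stmt_13_general c c' hc hc' f
end

section
/- Let (T,c) be an algebraic tree, equipped with the topology τ generated by the components S_x(y) := {z ∈ T \ {x} : c(x,y,z) ≠ x} for x ≠ y. Then τ is a Hausdorff topology. -/
variable {T : Type*}

/-- The component `S_x(y)` of `T \ {x}` containing `y`. -/
def component (c : T → T → T → T) (x y : T) : Set T := {z | z ≠ x ∧ c x y z ≠ x}

/-- The component topology, generated by the components `S_x(y)`, `x ≠ y`. -/
def componentTopology (c : T → T → T → T) : TopologicalSpace T :=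
  TopologicalSpace.generateFrom {S | ∃ x y, x ≠ y ∧ S = component c x y}

/-! Two distinct points `x, y` are separated by the components of `T \ {m}` containing them,
where `m = c(x,y,z)` is any point of `[x, y]` other than `x` and `y`: by the 4-point condition a
point `w` in both components would satisfy `c(m,y,w) = m`, i.e. not lie in `S_m(y)`. If there is no
such `m`, every `c(x,y,w)` is `x` or `y`, and the components `S_y(x)` and `S_x(y)` are already
disjoint. -/

open scoped Topology

theorem isOpen_component {c : T → T → T → T} {x y : T} (hxy : x ≠ y) :
    IsOpen[componentTopology c] (component c x y) :=
  TopologicalSpace.GenerateOpen.basic _ ⟨x, y, hxy, rfl⟩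

namespace IsAlgTree

variable {c : T → T → T → T}

theorem median_rotate (hc : IsAlgTree c) (x y z : T) : c x y z = c y z x :=
  (hc.1 x y z).trans (hc.2.1 y x z)

theorem median_median_left (hc : IsAlgTree c) (x y z : T) : c (c x y z) x y = c x y z := by
  rw [hc.median_rotate, hc.2.2.2.1]

theorem mem_component_self (hc : IsAlgTree c) {x y : T} (hxy : x ≠ y) : y ∈ component c x y :=
  ⟨hxy.symm, by rw [hc.2.2.1]; exact hxy.symm⟩

theorem disjoint_component_of_median_eq (hc : IsAlgTree c) {m x y : T} (hm : c m x y = m) :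
    Disjoint (component c m x) (component c m y) := by
  refine Set.disjoint_left.2 fun z ⟨_, hxz⟩ ⟨_, hyz⟩ => hyz ?_
  rcases hc.2.2.2.2 m x y z with h | h | h
  · exact absurd (h.symm.trans hm) hxz
  · exact h ▸ hm
  · -- the 4-point condition gives `c x y z = m`, so `m ∈ [y, z]`
    have hyzx : c y z x = m := by rw [← hc.median_rotate, ← h, hm]
    rw [hc.median_rotate, ← hyzx, hc.2.2.2.1]

end IsAlgTree

theorem stmt_15_general (c : T → T → T → T) (hc : IsAlgTree c) :
    @T2Space T (componentTopology c) := by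
  refine @T2Space.mk T (componentTopology c) fun x y hxy => ?_
  by_cases hmid : ∃ z, c x y z ≠ x ∧ c x y z ≠ y
  · obtain ⟨z, hmx, hmy⟩ := hmid
    exact ⟨_, _, isOpen_component hmx, isOpen_component hmy, hc.mem_component_self hmx,
      hc.mem_component_self hmy, hc.disjoint_component_of_median_eq (hc.median_median_left x y z)⟩
  · push Not at hmid
    refine ⟨_, _, isOpen_component hxy.symm, isOpen_component hxy, hc.mem_component_self hxy.symm,
      hc.mem_component_self hxy, Set.disjoint_left.2 fun w ⟨_, hyw⟩ ⟨_, hxw⟩ => hyw ?_⟩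
    rw [hc.1, hmid w hxw]

theorem stmt_15 [Nonempty T] (c : T → T → T → T) (hc : IsAlgTree c) :
    @T2Space T (componentTopology c) :=
  stmt_15_general c hc
end

section
/- Let (T,r) be a metric space satisfying the 4-point condition r(x₁,x₂)+r(x₃,x₄) ≤ max{r(x₁,x₃)+r(x₂,x₄), r(x₁,x₄)+r(x₂,x₃)} and admitting all branch points: for all x₁,x₂,x₃ there is a (unique) point c(x₁,x₂,x₃) lying on all three metric intervals [xᵢ,xⱼ] = {z : r(xᵢ,z)+r(z,xⱼ)=r(xᵢ,xⱼ)}. Then the branch point map c satisfies the axioms of an algebraic tree: it is symmetric, c(x,y,y)=y, c(x,y,c(x,y,z))=c(x,y,z), and c(x₁,x₂,x₃) ∈ {c(x₁,x₂,x₄), c(x₁,x₃,x₄), c(x₂,x₃,x₄)} for all x₁,x₂,x₃,x₄. -/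
variable {T : Type*}

/-! A branch point `p` of `x, y, z` sits at distance `(d(x,y) + d(x,z) - d(y,z)) / 2` from `x`,
and the four-point condition applied to `x, y, p, q` then forces any two branch points `p, q` to
coincide; symmetry and the two- and three-point axioms follow since in each case an obvious point
is a branch point. For the four-point axiom, the condition says that of the three pairings
`d₁₂ + d₃₄`, `d₁₃ + d₂₄`, `d₁₄ + d₂₃` the two largest coincide, and whenever
`d(a,v) + d(b,u) = d(a,u) + d(b,v)` the four-point condition on `m, v, a, b` shows that the
branch point `m` of `a, b, u` is also one of `a, b, v`. -/

def FourPointCondition (T : Type*) [MetricSpace T] : Prop :=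
  ∀ x₁ x₂ x₃ x₄ : T, dist x₁ x₂ + dist x₃ x₄ ≤
    max (dist x₁ x₃ + dist x₂ x₄) (dist x₁ x₄ + dist x₂ x₃)

section MetricTree

variable [MetricSpace T]

def IsBranchPoint (x y z p : T) : Prop :=
  dist x p + dist p y = dist x y ∧
  dist x p + dist p z = dist x z ∧
  dist y p + dist p z = dist y z

namespace IsBranchPoint

variable {x y z p q : T}

theorem swap_left (h : IsBranchPoint x y z p) : IsBranchPoint y x z p := by
  obtain ⟨hxy, hxz, hyz⟩ := h
  exact ⟨by linarith [dist_comm x y, dist_comm x p, dist_comm p y], hyz, hxz⟩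

theorem swap_right (h : IsBranchPoint x y z p) : IsBranchPoint x z y p := by
  obtain ⟨hxy, hxz, hyz⟩ := h
  exact ⟨hxz, hxy, by linarith [dist_comm y z, dist_comm y p, dist_comm p z]⟩

theorem self_right (x y : T) : IsBranchPoint x y y y := by
  simp [IsBranchPoint]

theorem self_of_isBranchPoint (h : IsBranchPoint x y z p) : IsBranchPoint x y p p := by
  simp [IsBranchPoint, h.1]

theorem eq (h4 : FourPointCondition T) (hp : IsBranchPoint x y z p)
    (hq : IsBranchPoint x y z q) : p = q := by
  obtain ⟨hp₁, hp₂, hp₃⟩ := hp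
  obtain ⟨hq₁, hq₂, hq₃⟩ := hq
  have hxp : dist x p = dist x q := by linarith [dist_comm p y, dist_comm q y]
  have hpq : dist p q ≤ 0 := by
    rcases le_max_iff.mp (h4 x y p q) with h | h <;>
      linarith [dist_comm p y, dist_comm q y]
  exact dist_le_zero.mp hpq

theorem of_dist_add_dist_eq (h4 : FourPointCondition T) {a b u v m : T}
    (hm : IsBranchPoint a b u m) (huv : dist a v + dist b u = dist a u + dist b v) :
    IsBranchPoint a b v m := by
  obtain ⟨hab, hau, hbu⟩ := hm
  have hmv : dist m v ≤ (dist a v + dist b v - dist a b) / 2 := by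
    rcases le_max_iff.mp (h4 m v a b) with h | h <;>
      linarith [dist_comm m a, dist_comm m b, dist_comm v a, dist_comm v b]
  have hav := dist_triangle a m v
  have hbv := dist_triangle b m v
  exact ⟨hab, by linarith [dist_comm m b], by linarith [dist_comm m b]⟩

end IsBranchPoint

theorem FourPointCondition.dist_add_dist_eq_or (h4 : FourPointCondition T) (x₁ x₂ x₃ x₄ : T) :
    dist x₁ x₃ + dist x₂ x₄ = dist x₁ x₄ + dist x₂ x₃ ∨
    dist x₁ x₂ + dist x₃ x₄ = dist x₁ x₄ + dist x₂ x₃ ∨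
    dist x₁ x₂ + dist x₃ x₄ = dist x₁ x₃ + dist x₂ x₄ := by
  have h₁ := h4 x₁ x₂ x₃ x₄
  have h₂ := h4 x₁ x₃ x₂ x₄
  have h₃ := h4 x₁ x₄ x₂ x₃
  rw [dist_comm x₃ x₂] at h₂
  rw [dist_comm x₄ x₃, dist_comm x₄ x₂] at h₃
  rcases le_max_iff.mp h₁ with h₁ | h₁ <;> rcases le_max_iff.mp h₂ with h₂ | h₂ <;>
    rcases le_max_iff.mp h₃ with h₃ | h₃ <;>
    first
      | exact Or.inl (by linarith)
      | exact Or.inr (Or.inl (by linarith))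
      | exact Or.inr (Or.inr (by linarith))

def IsBranchPointMap (c : T → T → T → T) : Prop :=
  ∀ x y z, IsBranchPoint x y z (c x y z)

namespace IsBranchPointMap

variable {c : T → T → T → T} (h4 : FourPointCondition T) (hc : IsBranchPointMap c)
include h4 hc

theorem comm_left (x y z : T) : c x y z = c y x z :=
  (hc x y z).swap_left.eq h4 (hc y x z)

theorem comm_right (x y z : T) : c x y z = c x z y :=
  (hc x y z).swap_right.eq h4 (hc x z y)

theorem apply_self_right (x y : T) : c x y y = y :=
  (hc x y y).eq h4 (.self_right x y)

theorem apply_apply (x y z : T) : c x y (c x y z) = c x y z :=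
  (hc x y (c x y z)).eq h4 (hc x y z).self_of_isBranchPoint

theorem eq_of_dist_add_dist_eq {a b u v : T}
    (h : dist a v + dist b u = dist a u + dist b v) : c a b u = c a b v :=
  ((hc a b u).of_dist_add_dist_eq h4 h).eq h4 (hc a b v)

theorem eq_or_eq_or_eq (x₁ x₂ x₃ x₄ : T) :
    c x₁ x₂ x₃ = c x₁ x₂ x₄ ∨ c x₁ x₂ x₃ = c x₁ x₃ x₄ ∨ c x₁ x₂ x₃ = c x₂ x₃ x₄ := by
  rcases h4.dist_add_dist_eq_or x₁ x₂ x₃ x₄ with h | h | h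
  · exact .inl (eq_of_dist_add_dist_eq h4 hc (by linarith))
  · refine .inr (.inl ((comm_right h4 hc x₁ x₂ x₃).trans (eq_of_dist_add_dist_eq h4 hc ?_)))
    linarith [dist_comm x₃ x₂]
  · refine .inr (.inr ((comm_left h4 hc x₁ x₂ x₃).trans
      ((comm_right h4 hc x₂ x₁ x₃).trans (eq_of_dist_add_dist_eq h4 hc ?_))))
    linarith [dist_comm x₃ x₁, dist_comm x₂ x₁]

theorem isAlgTree : IsAlgTree c :=
  ⟨comm_left h4 hc, comm_right h4 hc, apply_self_right h4 hc, apply_apply h4 hc,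
    eq_or_eq_or_eq h4 hc⟩

end IsBranchPointMap

end MetricTree

theorem stmt_18_general (T : Type*) [MetricSpace T]
    (h4pt : ∀ x₁ x₂ x₃ x₄ : T, dist x₁ x₂ + dist x₃ x₄ ≤
      max (dist x₁ x₃ + dist x₂ x₄) (dist x₁ x₄ + dist x₂ x₃))
    (c : T → T → T → T)
    (hbp : ∀ x y z : T,
      dist x (c x y z) + dist (c x y z) y = dist x y ∧
      dist x (c x y z) + dist (c x y z) z = dist x z ∧
      dist y (c x y z) + dist (c x y z) z = dist y z) :
    IsAlgTree c :=
  IsBranchPointMap.isAlgTree h4pt hbp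

theorem stmt_18 (T : Type*) [MetricSpace T] [Nonempty T]
    (h4pt : ∀ x₁ x₂ x₃ x₄ : T, dist x₁ x₂ + dist x₃ x₄ ≤
      max (dist x₁ x₃ + dist x₂ x₄) (dist x₁ x₄ + dist x₂ x₃))
    (c : T → T → T → T)
    (hbp : ∀ x y z : T,
      dist x (c x y z) + dist (c x y z) y = dist x y ∧
      dist x (c x y z) + dist (c x y z) z = dist x z ∧
      dist y (c x y z) + dist (c x y z) z = dist y z) :
    IsAlgTree c :=
  stmt_18_general T h4pt c hbp
end
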